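/- Let X be a separable Fréchet space over ℂ and let T : X → X be a continuous linear operator. Suppose that the linear span of { x ∈ X : T(x) = λx for some λ ∈ ℂ with |λ| < 1 } is dense in X and the linear span of { x ∈ X : T(x) = λx for some λ ∈ ℂ with |λ| > 1 } is dense in X. Then T is mixing, in particular hypercyclic. -/

import Mathlib

/-!
Pick `u` in the dense span of the contracting eigenvectors close to a point of `U`, and `v` in
the dense span of the expanding eigenvectors close to a point of `V`. On an eigenvector with
eigenvalue `c`, `|c| > 1`, the vectors `c⁻ⁿ • x` are preimages of `x` under `Tⁿ` tending to `0`;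
by linearity `v` has preimages `wₙ` under `Tⁿ` with `wₙ → 0`. Then `u + wₙ ∈ U` and
`Tⁿ (u + wₙ) = Tⁿ u + v ∈ V` for all large `n`, since `Tⁿ u → 0`. This is mixing; a dense orbit
follows by the Baire category theorem (Birkhoff's transitivity theorem).
-/

open Filter Topology Set Function

def IsTopologicallyMixing {X : Type*} [TopologicalSpace X] (f : X → X) : Prop :=
  ∀ U V : Set X, IsOpen U → IsOpen V → U.Nonempty → V.Nonempty →
    ∃ n₀ : ℕ, ∀ n ≥ n₀, (f^[n] '' U ∩ V).Nonempty

section Birkhoff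

variable {X : Type*} [TopologicalSpace X] {f : X → X}

theorem dense_iUnion_preimage_iterate
    (h : ∀ U V : Set X, IsOpen U → IsOpen V → U.Nonempty → V.Nonempty →
      ∃ n : ℕ, (f^[n] '' U ∩ V).Nonempty)
    {V : Set X} (hV : IsOpen V) (hVne : V.Nonempty) : Dense (⋃ n : ℕ, f^[n] ⁻¹' V) := by
  refine dense_iff_inter_open.2 fun U hU hUne => ?_
  obtain ⟨n, _, ⟨x, hxU, rfl⟩, hxV⟩ := h U V hU hV hUne hVne
  exact ⟨x, hxU, mem_iUnion.2 ⟨n, hxV⟩⟩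

theorem exists_dense_orbit_of_forall_image_iterate_inter_nonempty
    [BaireSpace X] [SecondCountableTopology X] [Nonempty X] (hf : Continuous f)
    (h : ∀ U V : Set X, IsOpen U → IsOpen V → U.Nonempty → V.Nonempty →
      ∃ n : ℕ, (f^[n] '' U ∩ V).Nonempty) :
    ∃ x, Dense (range fun n : ℕ => f^[n] x) := by
  obtain ⟨b, hbc, hb_empty, hb⟩ := TopologicalSpace.exists_countable_basis X
  have hne : ∀ s ∈ b, s.Nonempty := fun s hs =>
    nonempty_iff_ne_empty.2 fun h => hb_empty (h ▸ hs)
  have hG : Dense (⋂ s ∈ b, ⋃ n : ℕ, f^[n] ⁻¹' s) :=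
    dense_biInter_of_isOpen
      (fun s hs => isOpen_iUnion fun n => (hb.isOpen hs).preimage (hf.iterate n))
      hbc fun s hs => dense_iUnion_preimage_iterate h (hb.isOpen hs) (hne s hs)
  obtain ⟨x, hx⟩ := hG.nonempty
  refine ⟨x, hb.dense_iff.2 fun s hs _ => ?_⟩
  obtain ⟨n, hn⟩ := mem_iUnion.1 (mem_iInter₂.1 hx s hs)
  exact ⟨f^[n] x, hn, n, rfl⟩

theorem IsTopologicallyMixing.exists_dense_orbit
    [BaireSpace X] [SecondCountableTopology X] [Nonempty X] (hf : Continuous f)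
    (hmix : IsTopologicallyMixing f) : ∃ x, Dense (range fun n : ℕ => f^[n] x) :=
  exists_dense_orbit_of_forall_image_iterate_inter_nonempty hf fun U V hU hV hUne hVne =>
    let ⟨n₀, hn₀⟩ := hmix U V hU hV hUne hVne
    ⟨n₀, hn₀ n₀ le_rfl⟩

end Birkhoff

theorem isTopologicallyMixing_of_dense_tendsto_zero
    {X F : Type*} [AddZeroClass X] [TopologicalSpace X] [ContinuousAdd X]
    [FunLike F X X] [AddMonoidHomClass F X X] (T : F) {D₁ D₂ : Set X}
    (hD₁ : Dense D₁) (hD₂ : Dense D₂)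
    (hT₁ : ∀ u ∈ D₁, Tendsto (fun n => (⇑T)^[n] u) atTop (𝓝 0))
    (hT₂ : ∀ v ∈ D₂, ∃ w : ℕ → X, Tendsto w atTop (𝓝 0) ∧ ∀ n, (⇑T)^[n] (w n) = v) :
    IsTopologicallyMixing (⇑T) := by
  intro U V hU hV hUne hVne
  obtain ⟨u, huD, huU⟩ := hD₁.exists_mem_open hU hUne
  obtain ⟨v, hvD, hvV⟩ := hD₂.exists_mem_open hV hVne
  obtain ⟨w, hw, hwv⟩ := hT₂ v hvD
  have hU' : ∀ᶠ n in atTop, u + w n ∈ U := by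
    have : Tendsto (fun n => u + w n) atTop (𝓝 u) := by
      simpa using tendsto_const_nhds.add hw
    exact this (hU.mem_nhds huU)
  have hV' : ∀ᶠ n in atTop, (⇑T)^[n] (u + w n) ∈ V := by
    have : Tendsto (fun n => (⇑T)^[n] (u + w n)) atTop (𝓝 v) := by
      simp only [iterate_map_add, hwv]
      simpa using (hT₁ u huD).add tendsto_const_nhds
    exact this (hV.mem_nhds hvV)
  obtain ⟨n₀, hn₀⟩ := eventually_atTop.1 (hU'.and hV')
  exact ⟨n₀, fun n hn => ⟨_, mem_image_of_mem _ (hn₀ n hn).1, (hn₀ n hn).2⟩⟩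

theorem iterate_map_smul {R M F : Type*} [Semiring R] [AddCommMonoid M] [Module R M]
    [FunLike F M M] [LinearMapClass F R M M] (T : F) (c : R) (x : M) (n : ℕ) :
    (⇑T)^[n] (c • x) = c • (⇑T)^[n] x := by
  induction n with
  | zero => rfl
  | succ n ih => rw [iterate_succ_apply', ih, map_smul, iterate_succ_apply']

theorem iterate_map_eq_pow_smul {R M F : Type*} [Semiring R] [AddCommMonoid M] [Module R M]
    [FunLike F M M] [LinearMapClass F R M M] (T : F) {c : R} {x : M} (hx : T x = c • x)
    (n : ℕ) : (⇑T)^[n] x = c ^ n • x := by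
  induction n with
  | zero => simp
  | succ n ih => rw [iterate_succ_apply', ih, map_smul, hx, smul_smul, pow_succ]

section Eigenvectors

variable {𝕜 X F : Type*} [NormedField 𝕜] [AddCommGroup X] [Module 𝕜 X] [TopologicalSpace X]
  [ContinuousAdd X] [ContinuousSMul 𝕜 X] [FunLike F X X] [LinearMapClass F 𝕜 X X]

variable (𝕜) in
def stableSubmodule (T : F) : Submodule 𝕜 X where
  carrier := {u | Tendsto (fun n => (⇑T)^[n] u) atTop (𝓝 0)}
  zero_mem' := by simp [iterate_map_zero, tendsto_const_nhds]
  add_mem' {u v} hu hv := by simpa [iterate_map_add] using hu.add hv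
  smul_mem' c u hu := by simpa [iterate_map_smul] using hu.const_smul c

variable (𝕜) in
def smallPreimagesSubmodule (T : F) : Submodule 𝕜 X where
  carrier := {v | ∃ w : ℕ → X, Tendsto w atTop (𝓝 0) ∧ ∀ n, (⇑T)^[n] (w n) = v}
  zero_mem' := ⟨0, tendsto_const_nhds, fun n => iterate_map_zero T n⟩
  add_mem' := by
    rintro _ _ ⟨w, hw, hwu⟩ ⟨w', hw', hwv⟩
    exact ⟨fun n => w n + w' n, by simpa using hw.add hw',
      fun n => by simp [iterate_map_add, hwu, hwv]⟩
  smul_mem' := by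
    rintro c _ ⟨w, hw, hwv⟩
    exact ⟨fun n => c • w n, by simpa using hw.const_smul c,
      fun n => by simp [iterate_map_smul, hwv]⟩

theorem span_eigenvectors_norm_lt_one_le_stableSubmodule (T : F) :
    Submodule.span 𝕜 {x : X | ∃ c : 𝕜, ‖c‖ < 1 ∧ T x = c • x} ≤ stableSubmodule 𝕜 T :=
  Submodule.span_le.2 fun x ⟨c, hc, hx⟩ => by
    show Tendsto (fun n => (⇑T)^[n] x) atTop (𝓝 0)
    simpa [iterate_map_eq_pow_smul T hx] using
      (tendsto_pow_atTop_nhds_zero_of_norm_lt_one hc).smul_const x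

theorem span_eigenvectors_one_lt_norm_le_smallPreimagesSubmodule (T : F) :
    Submodule.span 𝕜 {x : X | ∃ c : 𝕜, 1 < ‖c‖ ∧ T x = c • x} ≤
      smallPreimagesSubmodule 𝕜 T := by
  refine Submodule.span_le.2 fun x ⟨c, hc, hx⟩ => ?_
  have hc₀ : c ≠ 0 := norm_pos_iff.1 (one_pos.trans hc)
  have hc_inv : ‖c⁻¹‖ < 1 := by rw [norm_inv]; exact inv_lt_one_of_one_lt₀ hc
  refine ⟨fun n => c⁻¹ ^ n • x, ?_, fun n => ?_⟩
  · simpa using (tendsto_pow_atTop_nhds_zero_of_norm_lt_one hc_inv).smul_const x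
  · rw [iterate_map_smul, iterate_map_eq_pow_smul T hx, smul_smul, ← mul_pow,
      inv_mul_cancel₀ hc₀, one_pow, one_smul]

end Eigenvectors

theorem stmt3_general {X : Type*} [AddCommGroup X] [Module ℂ X] [UniformSpace X] [IsUniformAddGroup X]
    [ContinuousSMul ℂ X] [CompleteSpace X] [TopologicalSpace.MetrizableSpace X]
    [TopologicalSpace.SeparableSpace X]
    (T : X →L[ℂ] X)
    (h1 : Dense (Submodule.span ℂ {x : X | ∃ c : ℂ, ‖c‖ < 1 ∧ T x = c • x} : Set X))
    (h2 : Dense (Submodule.span ℂ {x : X | ∃ c : ℂ, 1 < ‖c‖ ∧ T x = c • x} : Set X)) :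
    (∀ U V : Set X, IsOpen U → IsOpen V → U.Nonempty → V.Nonempty →
      ∃ n₀ : ℕ, ∀ n ≥ n₀, ((⇑T)^[n] '' U ∩ V).Nonempty) ∧
    ∃ x : X, Dense (Set.range fun n : ℕ => (⇑T)^[n] x) := by
  have : (uniformity X).IsCountablyGenerated := IsUniformAddGroup.uniformity_countably_generated
  have : SecondCountableTopology X := UniformSpace.secondCountable_of_separable X
  have hmix : IsTopologicallyMixing ⇑T :=
    isTopologicallyMixing_of_dense_tendsto_zero T h1 h2
      (fun _ hu => span_eigenvectors_norm_lt_one_le_stableSubmodule T hu)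
      (fun _ hv => span_eigenvectors_one_lt_norm_le_smallPreimagesSubmodule T hv)
  exact ⟨hmix, hmix.exists_dense_orbit T.continuous⟩

/-- **Godefroy–Shapiro type criterion.** Let `X` be a separable Fréchet space over `ℂ`
and `T : X → X` a continuous linear operator. If the span of the eigenvectors of `T`
corresponding to eigenvalues of modulus `< 1` is dense, and likewise for eigenvalues of
modulus `> 1`, then `T` is mixing, in particular hypercyclic. -/
theorem stmt3 {X : Type*} [AddCommGroup X] [Module ℂ X] [UniformSpace X] [IsUniformAddGroup X]
    [ContinuousSMul ℂ X] [CompleteSpace X] [TopologicalSpace.MetrizableSpace X]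
    [TopologicalSpace.SeparableSpace X]
    [Module ℝ X] [IsScalarTower ℝ ℂ X] [LocallyConvexSpace ℝ X]
    (T : X →L[ℂ] X)
    (h1 : Dense (Submodule.span ℂ {x : X | ∃ c : ℂ, ‖c‖ < 1 ∧ T x = c • x} : Set X))
    (h2 : Dense (Submodule.span ℂ {x : X | ∃ c : ℂ, 1 < ‖c‖ ∧ T x = c • x} : Set X)) :
    (∀ U V : Set X, IsOpen U → IsOpen V → U.Nonempty → V.Nonempty →
      ∃ n₀ : ℕ, ∀ n ≥ n₀, ((⇑T)^[n] '' U ∩ V).Nonempty) ∧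
    ∃ x : X, Dense (Set.range fun n : ℕ => (⇑T)^[n] x) :=
  stmt3_general T h1 h2
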